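/- Let M be a deterministic n×n symmetric matrix, p ∈ (0,1), E the subsampling residual of M, and u ∈ ℝ^n a deterministic vector. Set w = u ∘ u and 𝓜 = M ∘ M. Then Var(u^T E u) = ((1−p)/p) · ( 2 w^T 𝓜 w − Σ_{k=1}^n w(k)² 𝓜_{kk} ). -/

import Mathlib

open MeasureTheory ProbabilityTheory Filter Matrix
open scoped ENNReal NNReal BigOperators

/-- The spectral norm (largest singular value) of a real matrix, i.e. the operator norm
of the induced map between Euclidean spaces. -/
noncomputable def spectralNorm' {m n : Type*} [Fintype m] [Fintype n] [DecidableEq n]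
    (A : Matrix m n ℝ) : ℝ :=
  ‖LinearMap.toContinuousLinearMap (Matrix.toEuclideanLin A)‖

/-- The Euclidean norm of a vector. -/
noncomputable def euclNorm {n : Type*} [Fintype n] (x : n → ℝ) : ℝ :=
  Real.sqrt (∑ i, x i ^ 2)

/-- The sup norm `max_{i,j} |A i j|` of a matrix. -/
noncomputable def supNorm {m n : Type*} [Fintype m] [Fintype n] (A : Matrix m n ℝ) : ℝ :=
  ‖(fun i j => A i j : m → n → ℝ)‖

/-- An `m × m` Bernoulli-type symmetric random matrix with parameter `p`: the
on-or-above-diagonal entries are independent, equal to `√((1-p)/p)` with probability `p`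
and to `-√(p/(1-p))` with probability `1-p`. -/
def IsBernoulliType {Ω : Type*} [MeasurableSpace Ω] (P : Measure Ω) {m : ℕ} (p : ℝ)
    (C : Ω → Matrix (Fin m) (Fin m) ℝ) : Prop :=
  (∀ ω, (C ω).IsSymm) ∧
  (∀ i j, Measurable fun ω => C ω i j) ∧
  iIndepFun (β := fun _ : {q : Fin m × Fin m // q.1 ≤ q.2} => ℝ)
    (fun q ω => C ω q.val.1 q.val.2) P ∧
  ∀ i j : Fin m, i ≤ j →
    P {ω | C ω i j = Real.sqrt ((1 - p) / p)} = ENNReal.ofReal p ∧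
    P {ω | C ω i j = -Real.sqrt (p / (1 - p))} = ENNReal.ofReal (1 - p)

/-- `E` is the subsampling residual `E = S - M` of the symmetric matrix `M` with sampling
probability `p`; equivalently `E = √((1-p)/p) • (M ∘ C)` with `C` Bernoulli-type. -/
def IsSubsampleResidual {Ω : Type*} [MeasurableSpace Ω] (P : Measure Ω) {n : ℕ} (p : ℝ)
    (M : Matrix (Fin n) (Fin n) ℝ) (E : Ω → Matrix (Fin n) (Fin n) ℝ) : Prop :=
  ∃ C : Ω → Matrix (Fin n) (Fin n) ℝ, IsBernoulliType P p C ∧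
    ∀ ω, E ω = Real.sqrt ((1 - p) / p) • Matrix.hadamard M (C ω)

/-!
Write `E = √((1-p)/p) • (M ∘ C)`: the entries `C i j`, `i ≤ j`, are independent and take two
values `a > 0 > b` with probabilities `p`, `1 - p`, so each has variance `(a - b)² p (1 - p) = 1`.
Since `M` and `C` are symmetric, `uᵀ E u = √((1-p)/p) Σ_{i ≤ j} c_ij u_i M_ij u_j C_ij` with
`c_ij = 1` on the diagonal and `2` off it, so by independence the variance is
`(1-p)/p Σ_{i ≤ j} c_ij² (u_i M_ij u_j)²`; folding back with `c² = 2c - [i = j]` gives twice the full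
double sum minus the diagonal.
-/

section UpperTriangle

variable {ι R : Type*} [Fintype ι] [LinearOrder ι]

theorem sum_subtype_le_eq_sum_ite [AddCommMonoid R] (g : ι × ι → R) :
    ∑ q : {q : ι × ι // q.1 ≤ q.2}, g q = ∑ q : ι × ι, if q.1 ≤ q.2 then g q else 0 := by
  rw [← Finset.sum_filter, ← Finset.sum_subtype_eq_sum_filter, Finset.subtype_univ]

theorem sum_sum_eq_sum_upperTriangle [Semiring R] (f : ι → ι → R) (hf : ∀ i j, f i j = f j i) :
    ∑ i, ∑ j, f i j =
      ∑ q : {q : ι × ι // q.1 ≤ q.2}, (if q.1.1 = q.1.2 then 1 else 2) * f q.1.1 q.1.2 := by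
  calc ∑ i, ∑ j, f i j
      = ∑ q : ι × ι,
          ((if q.1 ≤ q.2 then f q.1 q.2 else 0) + if q.2 < q.1 then f q.1 q.2 else 0) := by
        rw [← Fintype.sum_prod_type']
        refine Fintype.sum_congr _ _ fun q => ?_
        split_ifs <;> first | (exfalso; order) | simp
    _ = ∑ q : ι × ι,
          ((if q.1 ≤ q.2 then f q.1 q.2 else 0) + if q.1 < q.2 then f q.1 q.2 else 0) := by
        rw [Finset.sum_add_distrib, Finset.sum_add_distrib]
        congr 1
        exact Fintype.sum_equiv (Equiv.prodComm ι ι) _ _ fun q => by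
          simp only [Equiv.prodComm_apply, Prod.fst_swap, Prod.snd_swap, hf q.1 q.2]
          rfl
    _ = _ := by
        rw [sum_subtype_le_eq_sum_ite (fun q => (if q.1 = q.2 then 1 else 2) * f q.1 q.2)]
        refine Fintype.sum_congr _ _ fun q => ?_
        split_ifs <;> first | (exfalso; order) | simp [two_mul]

theorem sum_upperTriangle_sq_mul [Ring R] (f : ι → ι → R) (hf : ∀ i j, f i j = f j i) :
    ∑ q : {q : ι × ι // q.1 ≤ q.2}, (if q.1.1 = q.1.2 then 1 else 2) ^ 2 * f q.1.1 q.1.2 =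
      2 * ∑ i, ∑ j, f i j - ∑ i, f i i := by
  -- the weight is `1` on the diagonal, and `(if i = j then 1 else 2) ^ 2 = 2 * weight - [i = j]`
  have hdiag := sum_sum_eq_sum_upperTriangle (fun i j => if i = j then f i j else 0)
    fun i j => by by_cases h : i = j <;> simp [h, eq_comm]
  simp only [Finset.sum_ite_eq, Finset.mem_univ, if_true] at hdiag
  rw [sum_sum_eq_sum_upperTriangle f hf, Finset.mul_sum, hdiag, ← Finset.sum_sub_distrib]
  refine Fintype.sum_congr _ _ fun q => ?_
  split_ifs <;> noncomm_ring

end UpperTriangle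

section TwoPoint

variable {Ω : Type*} [MeasurableSpace Ω] {P : Measure Ω} {X : Ω → ℝ} {a b : ℝ}

theorem ae_eq_or_eq_of_measure_add_measure_eq_one [IsProbabilityMeasure P] (hX : Measurable X)
    (hab : a ≠ b) (h : P {ω | X ω = a} + P {ω | X ω = b} = 1) :
    ∀ᵐ ω ∂P, X ω = a ∨ X ω = b := by
  have hdisj : Disjoint {ω | X ω = a} {ω | X ω = b} :=
    Set.disjoint_left.2 fun _ ha hb => hab (ha.symm.trans hb)
  have hmeas : MeasurableSet {ω | X ω = a ∨ X ω = b} :=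
    (hX (measurableSet_singleton a)).union (hX (measurableSet_singleton b))
  refine (ae_iff_measure_eq hmeas.nullMeasurableSet).2 ?_
  rw [measure_univ, Set.ofPred_or, measure_union hdisj (hX (measurableSet_singleton b)), h]

theorem memLp_of_ae_eq_or_eq [IsFiniteMeasure P] (hX : AEStronglyMeasurable X P)
    (h : ∀ᵐ ω ∂P, X ω = a ∨ X ω = b) (q : ℝ≥0∞) : MemLp X q P :=
  MemLp.of_bound hX (max |a| |b|) <| h.mono fun ω hω => by
    rcases hω with hω | hω <;> simp [hω]

theorem variance_of_ae_eq_or_eq [IsProbabilityMeasure P] (hX : AEMeasurable X P) (hab : a ≠ b)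
    (h : ∀ᵐ ω ∂P, X ω = a ∨ X ω = b) :
    Var[X; P] = (a - b) ^ 2 * P.real {ω | X ω = a} * P.real {ω | X ω = b} := by
  have hab' : a - b ≠ 0 := sub_ne_zero.2 hab
  set Y : Ω → ℝ := fun ω => (X ω - b) / (a - b)
  have hXY : X = fun ω => b + (a - b) * Y ω := by
    funext ω; simp only [Y]; field_simp; ring
  have hY : AEMeasurable Y P := (hX.sub_const b).div_const (a - b)
  have hY01 : ∀ᵐ ω ∂P, Y ω = 0 ∨ Y ω = 1 := h.mono fun ω hω => by
    rcases hω with hω | hω <;> simp [Y, hω, hab']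
  have hY0 : {ω | Y ω = 0} = {ω | X ω = b} := by
    ext ω; simp [Y, hab', sub_eq_zero]
  have hY1 : {ω | Y ω = 1} = {ω | X ω = a} := by
    ext ω; simp [Y, div_eq_one_iff_eq hab', sub_left_inj]
  calc Var[X; P] = Var[fun ω => b + (a - b) * Y ω; P] := congrArg (Var[·; P]) hXY
    _ = _ := by
      rw [variance_const_add (hY.const_mul _).aestronglyMeasurable, variance_const_mul,
        variance_of_ae_eq_zero_or_one hY hY01, hY0, hY1]
      ring

end TwoPoint

theorem sq_sqrt_div_add_sqrt_div_mul_eq_one {p : ℝ} (hp0 : 0 < p) (hp1 : p < 1) :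
    (√((1 - p) / p) + √(p / (1 - p))) ^ 2 * (p * (1 - p)) = 1 := by
  have hq : 0 < 1 - p := sub_pos.2 hp1
  have hprod : √((1 - p) / p) * √(p / (1 - p)) = 1 := by
    rw [← Real.sqrt_mul (div_pos hq hp0).le, div_mul_div_comm, mul_comm (1 - p),
      div_self (mul_pos hp0 hq).ne', Real.sqrt_one]
  rw [add_sq, Real.sq_sqrt (div_pos hq hp0).le, Real.sq_sqrt (div_pos hp0 hq).le, mul_assoc 2,
    hprod]
  field_simp
  ring

theorem sqrt_div_ne_neg_sqrt_div {p : ℝ} (hp0 : 0 < p) (hp1 : p < 1) :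
    √((1 - p) / p) ≠ -√(p / (1 - p)) := by
  have := Real.sqrt_pos.2 (div_pos (sub_pos.2 hp1) hp0)
  have := Real.sqrt_nonneg (p / (1 - p))
  linarith

namespace IsBernoulliType

variable {Ω : Type*} [MeasurableSpace Ω] {P : Measure Ω} [IsProbabilityMeasure P] {m : ℕ} {p : ℝ}
  {C : Ω → Matrix (Fin m) (Fin m) ℝ}

theorem ae_entry_eq_or_eq (hC : IsBernoulliType P p C) (hp0 : 0 < p) (hp1 : p < 1) {i j : Fin m}
    (hij : i ≤ j) :
    ∀ᵐ ω ∂P, C ω i j = √((1 - p) / p) ∨ C ω i j = -√(p / (1 - p)) := by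
  refine ae_eq_or_eq_of_measure_add_measure_eq_one (hC.2.1 i j)
    (sqrt_div_ne_neg_sqrt_div hp0 hp1) ?_
  rw [(hC.2.2.2 i j hij).1, (hC.2.2.2 i j hij).2, ← ENNReal.ofReal_add hp0.le (sub_pos.2 hp1).le]
  simp

theorem memLp_entry (hC : IsBernoulliType P p C) (hp0 : 0 < p) (hp1 : p < 1) {i j : Fin m}
    (hij : i ≤ j) : MemLp (fun ω => C ω i j) 2 P :=
  memLp_of_ae_eq_or_eq (hC.2.1 i j).aestronglyMeasurable (hC.ae_entry_eq_or_eq hp0 hp1 hij) 2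

theorem variance_entry (hC : IsBernoulliType P p C) (hp0 : 0 < p) (hp1 : p < 1) {i j : Fin m}
    (hij : i ≤ j) : Var[fun ω => C ω i j; P] = 1 := by
  rw [variance_of_ae_eq_or_eq (hC.2.1 i j).aemeasurable
    (sqrt_div_ne_neg_sqrt_div hp0 hp1) (hC.ae_entry_eq_or_eq hp0 hp1 hij),
    measureReal_def, measureReal_def, (hC.2.2.2 i j hij).1, (hC.2.2.2 i j hij).2,
    ENNReal.toReal_ofReal hp0.le, ENNReal.toReal_ofReal (sub_pos.2 hp1).le, sub_neg_eq_add,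
    mul_assoc, sq_sqrt_div_add_sqrt_div_mul_eq_one hp0 hp1]

end IsBernoulliType

theorem ProbabilityTheory.iIndepFun.variance_sum_const_mul {Ω ι : Type*} [MeasurableSpace Ω]
    {P : Measure Ω} [Fintype ι] {X : ι → Ω → ℝ} (hX : iIndepFun X P)
    (hX2 : ∀ i, MemLp (X i) 2 P) (c : ι → ℝ) :
    Var[fun ω => ∑ i, c i * X i ω; P] = ∑ i, c i ^ 2 * Var[X i; P] := by
  have hsum : (fun ω => ∑ i, c i * X i ω) = ∑ i, fun ω => c i * X i ω := by
    funext ω; simp only [Finset.sum_apply]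
  rw [hsum, IndepFun.variance_sum (fun i _ => (hX2 i).const_mul (c i))
    fun i _ j _ hij => (hX.indepFun hij).comp (measurable_const_mul _) (measurable_const_mul _)]
  exact Finset.sum_congr rfl fun i _ => variance_const_mul _ _ _

/-- the variance of `uᵀ E u` for the subsampling residual `E`. -/
theorem variance_quadratic_form_subsample_residual
    {Ω : Type*} [MeasurableSpace Ω] (P : Measure Ω) [IsProbabilityMeasure P]
    {n : ℕ} (M : Matrix (Fin n) (Fin n) ℝ) (p : ℝ) (u : Fin n → ℝ)
    (E : Ω → Matrix (Fin n) (Fin n) ℝ)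
    (hsymm : M.IsSymm) (hp0 : 0 < p) (hp1 : p < 1)
    (hE : IsSubsampleResidual P p M E) :
    variance (fun ω => ∑ i, ∑ j, u i * E ω i j * u j) P =
      (1 - p) / p *
        (2 * (∑ i, ∑ j, (u i) ^ 2 * (M i j) ^ 2 * (u j) ^ 2) -
          ∑ k, ((u k) ^ 2) ^ 2 * (M k k) ^ 2) := by
  obtain ⟨C, hC, hEC⟩ := hE
  have hentry : ∀ ω i j, E ω i j = √((1 - p) / p) * (M i j * C ω i j) := fun ω i j => by
    rw [hEC ω, Matrix.smul_apply, hadamard_apply, smul_eq_mul]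
  set weight : {q : Fin n × Fin n // q.1 ≤ q.2} → ℝ := fun q =>
    √((1 - p) / p) * (if q.1.1 = q.1.2 then 1 else 2) * (u q.1.1 * M q.1.1 q.1.2 * u q.1.2)
  have hform : (fun ω => ∑ i, ∑ j, u i * E ω i j * u j) =
      fun ω => ∑ q, weight q * C ω q.1.1 q.1.2 := by
    funext ω
    simp only [hentry]
    rw [sum_sum_eq_sum_upperTriangle _ fun i j => by
      rw [hsymm.apply i j, (hC.1 ω).apply i j]; ring]
    exact Finset.sum_congr rfl fun q _ => by ring
  rw [hform, hC.2.2.1.variance_sum_const_mul (fun q => hC.memLp_entry hp0 hp1 q.2)]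
  have hweight_sq : ∀ q, weight q ^ 2 = (1 - p) / p *
      ((if q.1.1 = q.1.2 then 1 else 2) ^ 2 * (u q.1.1 * M q.1.1 q.1.2 * u q.1.2) ^ 2) :=
      fun q => by
    rw [mul_pow, mul_pow, Real.sq_sqrt (div_pos (sub_pos.2 hp1) hp0).le]
    ring
  rw [Finset.sum_congr rfl fun q _ => by rw [hC.variance_entry hp0 hp1 q.2, mul_one, hweight_sq],
    ← Finset.mul_sum, sum_upperTriangle_sq_mul (fun i j => (u i * M i j * u j) ^ 2) fun i j => by
      rw [hsymm.apply i j]; ring]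
  simp only [mul_pow]
  congr 2
  exact Fintype.sum_congr _ _ fun k => by ring
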